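/- arXiv:1407.5890 — 5 statements merged into one kernel-verified Lean document; each statement's English description precedes it below -/
import Mathlib

section
/- For every α > 0 there exist constants C ≥ 1 and β > 0 such that for every μ > 0, every continuous h : [0,∞) → ℂ, and every twice continuously differentiable v : [0,∞) → ℂ satisfying the ordinary differential equation v''(t) + v'(t) + (μ⁴ + α) v(t) + μ² h(t) = 0 for all t ≥ 0, the quantity N(t) := (μ⁻²|v'(t)|² + μ²|v(t)|² + α μ⁻²|v(t)|²)^{1/2} satisfies N(t) ≤ C e^{−βt} N(0) + C ∫₀ᵗ e^{−β(t−s)} μ |h(s)| ds for all t ≥ 0. (This is the linear hyperbolic Cahn–Hilliard–Oono dissipative estimate at a single Fourier frequency ξ with μ = 2π‖ξ‖, with constants uniform in the frequency.) -/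
/-!
The estimate holds for `v'' + v' + γ v + f = 0` in any real inner product space, uniformly in
`γ ≥ 2κ`, with `0 ≤ κ ≤ 1/2`. The Lyapunov functional
`Φ = ‖v' + κ v‖² + (γ - κ²)‖v‖² = ‖v'‖² + γ‖v‖² + 2κ⟪v, v'⟫` is comparable to the energy
`E = ‖v'‖² + γ‖v‖²` (`E/2 ≤ Φ ≤ 2E`), and along solutions `Φ' ≤ -(2κ/3) Φ + 2‖f‖ √Φ`.
An integrating factor applied to `√Φ` gives exponential decay up to the forcing integral.
For a Fourier mode take `γ = μ⁴ + α`, `f = μ² h`, `κ = min 1 α / 2`; then `N = μ⁻¹ √E`.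
-/

open Set Real MeasureTheory Topology

lemma le_exp_neg_mul_add_integral_of_hasDerivAt_le {y y' g : ℝ → ℝ} {β a b : ℝ} (hab : a ≤ b)
    (hy : ContinuousOn y (Icc a b)) (hy' : ∀ x ∈ Ioo a b, HasDerivAt y (y' x) x)
    (hg : IntegrableOn g (Icc a b)) (hle : ∀ x ∈ Ioo a b, y' x ≤ -β * y x + g x) :
    y b ≤ exp (-β * (b - a)) * y a + ∫ s in a..b, exp (-β * (b - s)) * g s := by
  have hexp : Continuous fun s => exp (β * s) := by fun_prop
  have key := intervalIntegral.sub_le_integral_of_hasDeriv_right_of_le hab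
    (hexp.continuousOn.mul hy)
    (fun x hx => (((hasDerivAt_id x).const_mul β).exp.mul (hy' x hx)).hasDerivWithinAt)
    (hg.continuousOn_mul hexp.continuousOn isCompact_Icc)
    (fun x hx => by
      have := mul_le_mul_of_nonneg_left (hle x hx) (exp_pos (β * x)).le
      simp only [id, mul_one]
      linarith)
  simp only [Pi.mul_apply] at key
  have hint : ∫ s in a..b, exp (-β * (b - s)) * g s =
      exp (-β * b) * ∫ s in a..b, exp (β * s) * g s := by
    rw [← intervalIntegral.integral_const_mul]
    congr 1 with s
    rw [← mul_assoc, ← exp_add]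
    ring_nf
  have hb : exp (-β * b) * exp (β * b) = 1 := by rw [← exp_add]; simp
  have ha : exp (-β * b) * exp (β * a) = exp (-β * (b - a)) := by rw [← exp_add]; ring_nf
  rw [hint, ← ha]
  calc y b = exp (-β * b) * (exp (β * b) * y b) := by rw [← mul_assoc, hb, one_mul]
    _ ≤ _ := by nlinarith [exp_pos (-β * b)]

lemma sqrt_le_exp_neg_mul_add_integral_of_hasDerivAt_le {Φ Φ' g : ℝ → ℝ} {β a b : ℝ}
    (hab : a ≤ b) (hβ : 0 ≤ β) (hΦ : ContinuousOn Φ (Icc a b)) (hΦ0 : ∀ x ∈ Icc a b, 0 ≤ Φ x)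
    (hΦ' : ∀ x ∈ Ioo a b, HasDerivAt Φ (Φ' x) x) (hg : IntegrableOn g (Icc a b))
    (hg0 : ∀ x ∈ Ioo a b, 0 ≤ g x) (hle : ∀ x ∈ Ioo a b, Φ' x ≤ -2 * β * Φ x + 2 * g x * √(Φ x)) :
    √(Φ b) ≤ exp (-β * (b - a)) * √(Φ a) + ∫ s in a..b, exp (-β * (b - s)) * g s := by
  refine le_of_forall_pos_le_add fun δ hδ => ?_
  -- `√(Φ + δ²) - δ` is differentiable even where `Φ` vanishes, and obeys the linear inequality
  have hz := le_exp_neg_mul_add_integral_of_hasDerivAt_le (β := β)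
    (y := fun x => √(Φ x + δ ^ 2) - δ) (y' := fun x => Φ' x / (2 * √(Φ x + δ ^ 2))) hab
    ((hΦ.add continuousOn_const).sqrt.sub continuousOn_const)
    (fun x hx => (((hΦ' x hx).add_const _).sqrt
      (by nlinarith [hΦ0 x (Ioo_subset_Icc_self hx)])).sub_const δ) hg
    (fun x hx => by
      have hΦx := hΦ0 x (Ioo_subset_Icc_self hx)
      have hS : 0 < √(Φ x + δ ^ 2) := sqrt_pos.2 (by positivity)
      have hSsq := sq_sqrt (show 0 ≤ Φ x + δ ^ 2 by positivity)
      have hδS : δ ≤ √(Φ x + δ ^ 2) := le_sqrt_of_sq_le (by linarith)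
      have hΦS : √(Φ x) ≤ √(Φ x + δ ^ 2) := sqrt_le_sqrt (le_add_of_nonneg_right (sq_nonneg δ))
      rw [div_le_iff₀ (by positivity)]
      nlinarith [hle x hx, mul_nonneg hβ (mul_nonneg hδ.le (sub_nonneg.2 hδS)),
        mul_nonneg (hg0 x hx) (sub_nonneg.2 hΦS)])
  have hb : √(Φ b) ≤ √(Φ b + δ ^ 2) := sqrt_le_sqrt (le_add_of_nonneg_right (sq_nonneg δ))
  have ha : √(Φ a + δ ^ 2) - δ ≤ √(Φ a) := by
    rw [sub_le_iff_le_add, sqrt_le_iff]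
    exact ⟨by positivity, by nlinarith [sq_sqrt (hΦ0 a (left_mem_Icc.2 hab)), sqrt_nonneg (Φ a)]⟩
  nlinarith [mul_le_mul_of_nonneg_left ha (exp_pos (-β * (b - a))).le]

section DampedOscillator

variable {V : Type*} [NormedAddCommGroup V] [InnerProductSpace ℝ V]

def modifiedEnergy (γ κ : ℝ) (x x' : V) : ℝ := ‖x' + κ • x‖ ^ 2 + (γ - κ ^ 2) * ‖x‖ ^ 2

variable {γ κ : ℝ}

lemma modifiedEnergy_nonneg (hκγ : κ ^ 2 ≤ γ) (x x' : V) : 0 ≤ modifiedEnergy γ κ x x' := by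
  unfold modifiedEnergy
  have := mul_nonneg (sub_nonneg.2 hκγ) (sq_nonneg ‖x‖)
  positivity

lemma energy_le_two_mul_modifiedEnergy (hκγ : 4 * κ ^ 2 ≤ γ) (x x' : V) :
    ‖x'‖ ^ 2 + γ * ‖x‖ ^ 2 ≤ 2 * modifiedEnergy γ κ x x' := by
  have h := norm_sub_le (x' + κ • x) (κ • x)
  rw [add_sub_cancel_right, norm_smul, Real.norm_eq_abs] at h
  unfold modifiedEnergy
  nlinarith [norm_nonneg x', norm_nonneg (x' + κ • x), norm_nonneg x, abs_nonneg κ, sq_abs κ,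
    sq_nonneg (‖x' + κ • x‖ - |κ| * ‖x‖)]

lemma modifiedEnergy_le_two_mul_energy (hκγ : κ ^ 2 ≤ γ) (x x' : V) :
    modifiedEnergy γ κ x x' ≤ 2 * (‖x'‖ ^ 2 + γ * ‖x‖ ^ 2) := by
  have h := norm_add_le x' (κ • x)
  rw [norm_smul, Real.norm_eq_abs] at h
  unfold modifiedEnergy
  nlinarith [norm_nonneg x', norm_nonneg (x' + κ • x), norm_nonneg x, abs_nonneg κ, sq_abs κ,
    sq_nonneg (‖x'‖ - |κ| * ‖x‖)]

lemma hasDerivAt_modifiedEnergy {v v' : ℝ → V} {x' x'' : V} {t : ℝ}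
    (hv : HasDerivAt v x' t) (hv' : HasDerivAt v' x'' t) :
    HasDerivAt (fun s => modifiedEnergy γ κ (v s) (v' s))
      (2 * inner ℝ (v' t + κ • v t) (x'' + κ • x') + (γ - κ ^ 2) * (2 * inner ℝ (v t) x')) t :=
  (hv'.add (hv.const_smul κ)).norm_sq.add (hv.norm_sq.const_mul _)

-- `A = ‖x' + κ x‖`, `B = ‖x‖`, `c = ⟪x' + κ x, x⟫`: the unforced part of `Φ'` along solutions.
lemma damping_le (hκ : 0 ≤ κ) (hκ₂ : κ ≤ 1 / 2) (hκγ : 2 * κ ≤ γ) {A B c : ℝ}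
    (hc : |c| ≤ A * B) :
    -2 * (1 - κ) * A ^ 2 + 2 * κ * (1 - 2 * κ) * c - 2 * κ * (γ - κ ^ 2) * B ^ 2
      ≤ -2 * (κ / 3) * (A ^ 2 + (γ - κ ^ 2) * B ^ 2) := by
  have hAB : 0 ≤ A * B := (abs_nonneg c).trans hc
  have hq : 0 ≤ κ * (1 - 2 * κ) := mul_nonneg hκ (by linarith)
  have hG : 3 / 2 * κ ≤ γ - κ ^ 2 := by nlinarith
  nlinarith [mul_le_mul_of_nonneg_left (le_abs_self c |>.trans hc) hq,
    mul_nonneg (mul_nonneg hκ hκ) hAB, mul_nonneg hκ (sq_nonneg A),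
    mul_nonneg (mul_nonneg hκ (sub_nonneg.2 hG)) (sq_nonneg B),
    sq_nonneg (A - 3 / 2 * κ * B)]

lemma modifiedEnergy_deriv_le (hκ : 0 ≤ κ) (hκ₂ : κ ≤ 1 / 2) (hκγ : 2 * κ ≤ γ) (x x' f : V) :
    2 * inner ℝ (x' + κ • x) ((-x' - γ • x - f) + κ • x') + (γ - κ ^ 2) * (2 * inner ℝ x x')
      ≤ -2 * (κ / 3) * modifiedEnergy γ κ x x' + 2 * ‖f‖ * √(modifiedEnergy γ κ x x') := by
  obtain ⟨w, rfl⟩ : ∃ w, x' = w - κ • x := ⟨x' + κ • x, by simp⟩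
  have hκ2 : κ ^ 2 ≤ γ := by nlinarith
  have hw : ‖w‖ ≤ √(modifiedEnergy γ κ x (w - κ • x)) := by
    apply le_sqrt_of_sq_le
    unfold modifiedEnergy
    simp only [sub_add_cancel]
    nlinarith [mul_nonneg (sub_nonneg.2 hκ2) (sq_nonneg ‖x‖)]
  have hdamp := damping_le hκ hκ₂ hκγ (abs_real_inner_le_norm w x)
  have hforce := real_inner_le_norm w (-f)
  rw [inner_neg_right, norm_neg] at hforce
  unfold modifiedEnergy at hw ⊢
  simp only [sub_add_cancel] at hw ⊢
  simp only [inner_add_right, inner_sub_right, inner_smul_right, inner_neg_right,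
    real_inner_self_eq_norm_sq, real_inner_comm x w] at hdamp ⊢
  nlinarith [mul_le_mul_of_nonneg_left hw (norm_nonneg f)]

lemma dampedOscillator_sqrt_modifiedEnergy_le (hκ : 0 ≤ κ) (hκ₂ : κ ≤ 1 / 2) (hκγ : 2 * κ ≤ γ)
    {v v' v'' f : ℝ → V} (hv : ∀ t ∈ Ici (0 : ℝ), HasDerivWithinAt v (v' t) (Ici 0) t)
    (hv' : ∀ t ∈ Ici (0 : ℝ), HasDerivWithinAt v' (v'' t) (Ici 0) t) (hf : ContinuousOn f (Ici 0))
    (hode : ∀ t ∈ Ici (0 : ℝ), v'' t + v' t + γ • v t + f t = 0) {t : ℝ} (ht : 0 ≤ t) :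
    √(modifiedEnergy γ κ (v t) (v' t)) ≤
      exp (-(κ / 3) * t) * √(modifiedEnergy γ κ (v 0) (v' 0)) +
        ∫ s in 0..t, exp (-(κ / 3) * (t - s)) * ‖f s‖ := by
  have hκ2 : κ ^ 2 ≤ γ := by nlinarith
  have hvc : ContinuousOn v (Ici 0) := fun s hs => (hv s hs).continuousWithinAt
  have hv'c : ContinuousOn v' (Ici 0) := fun s hs => (hv' s hs).continuousWithinAt
  have hinterior : ∀ x ∈ Ioo 0 t, Ici (0 : ℝ) ∈ 𝓝 x := fun x hx => Ici_mem_nhds hx.1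
  have hode' : ∀ x ∈ Ici (0 : ℝ), v'' x = -v' x - γ • v x - f x := fun x hx =>
    sub_eq_zero.1 (by rw [← hode x hx]; abel)
  have key := sqrt_le_exp_neg_mul_add_integral_of_hasDerivAt_le (β := κ / 3)
    (Φ := fun s => modifiedEnergy γ κ (v s) (v' s)) (g := fun s => ‖f s‖) ht (by positivity)
    (((hv'c.add (hvc.const_smul κ)).norm.pow 2).add
      (continuousOn_const.mul (hvc.norm.pow 2)) |>.mono Icc_subset_Ici_self)
    (fun _ _ => modifiedEnergy_nonneg hκ2 _ _)
    (fun x hx => hasDerivAt_modifiedEnergy ((hv x hx.1.le).hasDerivAt (hinterior x hx))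
      ((hv' x hx.1.le).hasDerivAt (hinterior x hx)))
    ((hf.mono Icc_subset_Ici_self).norm.integrableOn_Icc) (fun _ _ => norm_nonneg _)
    (fun x hx => by
      rw [hode' x hx.1.le]
      exact modifiedEnergy_deriv_le hκ hκ₂ hκγ _ _ _)
  rwa [sub_zero] at key

theorem dampedOscillator_sqrt_energy_le (hκ : 0 ≤ κ) (hκ₂ : κ ≤ 1 / 2) (hκγ : 2 * κ ≤ γ)
    {v v' v'' f : ℝ → V} (hv : ∀ t ∈ Ici (0 : ℝ), HasDerivWithinAt v (v' t) (Ici 0) t)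
    (hv' : ∀ t ∈ Ici (0 : ℝ), HasDerivWithinAt v' (v'' t) (Ici 0) t) (hf : ContinuousOn f (Ici 0))
    (hode : ∀ t ∈ Ici (0 : ℝ), v'' t + v' t + γ • v t + f t = 0) {t : ℝ} (ht : 0 ≤ t) :
    √(‖v' t‖ ^ 2 + γ * ‖v t‖ ^ 2) ≤
      2 * exp (-(κ / 3) * t) * √(‖v' 0‖ ^ 2 + γ * ‖v 0‖ ^ 2) +
        2 * ∫ s in 0..t, exp (-(κ / 3) * (t - s)) * ‖f s‖ := by
  have hκ2 : κ ^ 2 ≤ γ := by nlinarith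
  have hdecay := dampedOscillator_sqrt_modifiedEnergy_le hκ hκ₂ hκγ hv hv' hf hode ht
  have hupper : √(‖v' t‖ ^ 2 + γ * ‖v t‖ ^ 2) ≤ √2 * √(modifiedEnergy γ κ (v t) (v' t)) := by
    rw [← sqrt_mul zero_le_two]
    exact sqrt_le_sqrt (energy_le_two_mul_modifiedEnergy (by nlinarith) _ _)
  have hlower : √(modifiedEnergy γ κ (v 0) (v' 0)) ≤ √2 * √(‖v' 0‖ ^ 2 + γ * ‖v 0‖ ^ 2) := by
    rw [← sqrt_mul zero_le_two]
    exact sqrt_le_sqrt (modifiedEnergy_le_two_mul_energy hκ2 _ _)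
  have hJ : 0 ≤ ∫ s in 0..t, exp (-(κ / 3) * (t - s)) * ‖f s‖ :=
    intervalIntegral.integral_nonneg ht fun _ _ => by positivity
  have hsqrt2 : √2 ≤ 2 := by rw [sqrt_le_left zero_le_two]; norm_num
  calc √(‖v' t‖ ^ 2 + γ * ‖v t‖ ^ 2)
      ≤ √2 * (exp (-(κ / 3) * t) * √(modifiedEnergy γ κ (v 0) (v' 0)) +
          ∫ s in 0..t, exp (-(κ / 3) * (t - s)) * ‖f s‖) :=
        hupper.trans (mul_le_mul_of_nonneg_left hdecay (sqrt_nonneg 2))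
    _ ≤ √2 * (exp (-(κ / 3) * t) * (√2 * √(‖v' 0‖ ^ 2 + γ * ‖v 0‖ ^ 2)) +
          ∫ s in 0..t, exp (-(κ / 3) * (t - s)) * ‖f s‖) := by gcongr
    _ = 2 * exp (-(κ / 3) * t) * √(‖v' 0‖ ^ 2 + γ * ‖v 0‖ ^ 2) +
          √2 * ∫ s in 0..t, exp (-(κ / 3) * (t - s)) * ‖f s‖ := by
        rw [← mul_assoc (exp _), mul_comm (exp _) √2, mul_add, ← mul_assoc, ← mul_assoc,
          mul_self_sqrt zero_le_two]
    _ ≤ _ := by gcongr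

end DampedOscillator

lemma sqrt_inv_sq_mul_add_eq {μ : ℝ} (hμ : 0 < μ) (α p q : ℝ) :
    √((μ ^ 2)⁻¹ * p + μ ^ 2 * q + α * (μ ^ 2)⁻¹ * q) = μ⁻¹ * √(p + (μ ^ 4 + α) * q) := by
  rw [show (μ ^ 2)⁻¹ * p + μ ^ 2 * q + α * (μ ^ 2)⁻¹ * q = μ⁻¹ ^ 2 * (p + (μ ^ 4 + α) * q) by
      field_simp; ring,
    sqrt_mul (by positivity), sqrt_sq (by positivity)]

/-- Dissipative estimate for the linear hyperbolic Cahn–Hilliard–Oono equation at a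
single Fourier frequency `μ = 2π‖ξ‖`: the ODE `v'' + v' + (μ⁴+α)v + μ²h = 0` satisfies
`N(t) ≤ C e^{-βt} N(0) + C ∫₀ᵗ e^{-β(t-s)} μ|h(s)| ds` with
`N(t) = (μ⁻²|v'|² + μ²|v|² + αμ⁻²|v|²)^{1/2}`, where `C ≥ 1` and `β > 0` depend only
on `α` (uniformly in the frequency `μ`). -/
theorem linCHO_fourier_mode_estimate (α : ℝ) (hα : 0 < α) :
    ∃ C : ℝ, 1 ≤ C ∧ ∃ β : ℝ, 0 < β ∧
      ∀ μ : ℝ, 0 < μ →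
      ∀ h : ℝ → ℂ, ContinuousOn h (Ici 0) →
      ∀ v v' v'' : ℝ → ℂ,
        (∀ t ∈ Ici (0:ℝ), HasDerivWithinAt v (v' t) (Ici 0) t) →
        (∀ t ∈ Ici (0:ℝ), HasDerivWithinAt v' (v'' t) (Ici 0) t) →
        ContinuousOn v'' (Ici 0) →
        (∀ t ∈ Ici (0:ℝ),
          v'' t + v' t + ((μ^4 + α : ℝ) : ℂ) * v t + ((μ^2 : ℝ) : ℂ) * h t = 0) →
        ∀ t ∈ Ici (0:ℝ),
          Real.sqrt ((μ^2)⁻¹ * ‖v' t‖^2 + μ^2 * ‖v t‖^2 + α * (μ^2)⁻¹ * ‖v t‖^2)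
            ≤ C * Real.exp (-β * t) *
                Real.sqrt ((μ^2)⁻¹ * ‖v' 0‖^2 + μ^2 * ‖v 0‖^2 + α * (μ^2)⁻¹ * ‖v 0‖^2)
              + C * ∫ s in Ioc (0:ℝ) t, Real.exp (-β * (t - s)) * (μ * ‖h s‖) := by
  refine ⟨2, one_le_two, min 1 α / 6, by positivity, ?_⟩
  intro μ hμ h hh v v' v'' hv hv' _ hode t ht
  have key := dampedOscillator_sqrt_energy_le (κ := min 1 α / 2) (γ := μ ^ 4 + α)
    (f := fun s => ((μ ^ 2 : ℝ) : ℂ) * h s) (by positivity) (by linarith [min_le_left 1 α])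
    (by linarith [min_le_right 1 α, pow_pos hμ 4]) hv hv' (continuousOn_const.mul hh)
    (fun s hs => by rw [Complex.real_smul]; exact hode s hs) ht
  have hforcing : ∫ s in 0..t, exp (-(min 1 α / 2 / 3) * (t - s)) * ‖((μ ^ 2 : ℝ) : ℂ) * h s‖ =
      μ * ∫ s in Ioc 0 t, exp (-(min 1 α / 6) * (t - s)) * (μ * ‖h s‖) := by
    rw [intervalIntegral.integral_of_le ht, ← integral_const_mul]
    congr 1 with s
    rw [norm_mul, Complex.norm_real, norm_of_nonneg (by positivity)]
    ring_nf
  rw [hforcing] at key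
  rw [sqrt_inv_sq_mul_add_eq hμ, sqrt_inv_sq_mul_add_eq hμ]
  calc μ⁻¹ * √(‖v' t‖ ^ 2 + (μ ^ 4 + α) * ‖v t‖ ^ 2)
      ≤ μ⁻¹ * (2 * exp (-(min 1 α / 2 / 3) * t) * √(‖v' 0‖ ^ 2 + (μ ^ 4 + α) * ‖v 0‖ ^ 2) +
          2 * (μ * ∫ s in Ioc 0 t, exp (-(min 1 α / 6) * (t - s)) * (μ * ‖h s‖))) := by gcongr
    _ = _ := by field_simp; ring_nf
end

section
/- Let γ > 0, C > 0, M > 0 and T > 0, and let Y : [0,T] → [0,∞) be continuous with Y(0) ≤ M and Y(τ) ≤ M + C τ^γ (1 + Y(τ)⁴) Y(τ) for all τ ∈ [0,T]. Then there exists τ₀ > 0, depending only on γ, C and M (and not on T or Y), such that Y(τ) ≤ 2M for all τ ∈ [0, min(τ₀, T)]. -/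
/-!
Since `Y 0 ≤ M < 2M`, if `Y` exceeded `2M` somewhere on `[0, min(τ₀, T)]`, continuity would
give a point `s` there with `Y s = 2M`. At such a point the hypothesis reads
`2M ≤ M + C s^γ (1 + (2M)⁴) 2M`, and `τ₀` is chosen so that the last term is at most `M / 2`.
-/

open Set

theorem ContinuousOn.lt_of_forall_ne {f : ℝ → ℝ} {a b c : ℝ} (hab : a ≤ b)
    (hf : ContinuousOn f (Icc a b)) (ha : f a < c) (hne : ∀ s ∈ Icc a b, f s ≠ c) :
    f b < c := by
  by_contra! hb
  obtain ⟨s, hs, hfs⟩ := intermediate_value_Icc hab hf ⟨ha.le, hb⟩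
  exact hne s hs hfs

noncomputable def bootstrapTime (γ C M : ℝ) : ℝ :=
  (M / (2 * C * (1 + (2 * M) ^ 4) * (2 * M))) ^ γ⁻¹

theorem bootstrapTime_pos {γ C M : ℝ} (hC : 0 < C) (hM : 0 < M) : 0 < bootstrapTime γ C M := by
  unfold bootstrapTime
  positivity

theorem growth_term_le_half_of_le_bootstrapTime {γ C M s : ℝ} (hγ : 0 < γ) (hC : 0 < C)
    (hM : 0 < M) (hs : 0 ≤ s) (hsτ : s ≤ bootstrapTime γ C M) :
    C * s ^ γ * (1 + (2 * M) ^ 4) * (2 * M) ≤ M / 2 := by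
  have hK : 0 < 2 * C * (1 + (2 * M) ^ 4) * (2 * M) := by positivity
  have hsγ : s ^ γ ≤ M / (2 * C * (1 + (2 * M) ^ 4) * (2 * M)) :=
    (Real.le_rpow_inv_iff_of_pos hs (by positivity) hγ).mp hsτ
  calc C * s ^ γ * (1 + (2 * M) ^ 4) * (2 * M)
      = s ^ γ * (2 * C * (1 + (2 * M) ^ 4) * (2 * M)) / 2 := by ring
    _ ≤ M / (2 * C * (1 + (2 * M) ^ 4) * (2 * M)) * (2 * C * (1 + (2 * M) ^ 4) * (2 * M)) / 2 := by
        gcongr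
    _ = M / 2 := by field_simp

/-- Continuation (bootstrap) lemma: if a continuous nonnegative function `Y` on `[0,T]`
satisfies `Y(0) ≤ M` and `Y(τ) ≤ M + Cτ^γ(1+Y(τ)⁴)Y(τ)`, then `Y ≤ 2M` on
`[0, min(τ₀,T)]` for some `τ₀ > 0` depending only on `γ`, `C` and `M`. -/
theorem bootstrap_lemma (γ C M : ℝ) (hγ : 0 < γ) (hC : 0 < C) (hM : 0 < M) :
    ∃ τ₀ : ℝ, 0 < τ₀ ∧
      ∀ T : ℝ, 0 < T → ∀ Y : ℝ → ℝ,
        ContinuousOn Y (Icc 0 T) →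
        (∀ τ ∈ Icc (0:ℝ) T, 0 ≤ Y τ) →
        Y 0 ≤ M →
        (∀ τ ∈ Icc (0:ℝ) T, Y τ ≤ M + C * τ ^ γ * (1 + Y τ ^ 4) * Y τ) →
        ∀ τ ∈ Icc (0:ℝ) (min τ₀ T), Y τ ≤ 2 * M := by
  refine ⟨bootstrapTime γ C M, bootstrapTime_pos hC hM, ?_⟩
  intro T _ Y hY _ hY0 hYbound τ ⟨hτ0, hτ⟩
  have hsub : Icc 0 τ ⊆ Icc 0 T := Icc_subset_Icc le_rfl (hτ.trans (min_le_right _ _))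
  refine (hY.mono hsub |>.lt_of_forall_ne hτ0 (by linarith) fun s hs hYs => ?_).le
  have hcross := hYbound s (hsub hs)
  rw [hYs] at hcross
  have hsmall := growth_term_le_half_of_le_bootstrapTime hγ hC hM hs.1
    (hs.2.trans (hτ.trans (min_le_left _ _)))
  linarith
end

section
/- Let β > 0, T > 0, let E : [0,T] → [0,∞) be continuously differentiable and K : [0,T] → [0,∞) be continuous, and suppose E'(t) + β E(t) ≤ K(t) √(E(t)) for all t ∈ [0,T]. Then for all t ∈ [0,T]: √(E(t)) ≤ e^{−βt/2} √(E(0)) + ½ ∫₀ᵗ e^{−β(t−s)/2} K(s) ds. -/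
open Set Real Filter Topology MeasureTheory

/-!
For `ε > 0` the function `f = √(E + ε²)` is differentiable, and since `√E ≤ f` and `ε ≤ f` it
satisfies the linear differential inequality `f' + (β/2) f ≤ K/2 + βε/2`. The integrating factor
`e^{βs/2}` turns this into a bound on `f(t)`, which dominates `√(E t)` and tends to the claimed
bound as `ε → 0`.
-/

theorem le_exp_mul_add_integral_of_deriv_add_mul_le {u u' g : ℝ → ℝ} {c a b : ℝ} (hab : a ≤ b)
    (hu : ContinuousOn u (Icc a b))
    (hu' : ∀ x ∈ Ioo a b, HasDerivWithinAt u (u' x) (Ioi x) x)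
    (hg : IntegrableOn g (Icc a b)) (hle : ∀ x ∈ Ioo a b, u' x + c * u x ≤ g x) :
    u b ≤ exp (-c * (b - a)) * u a + ∫ s in a..b, exp (-c * (b - s)) * g s := by
  have hexp : ContinuousOn (fun s => exp (c * s)) (Icc a b) := by fun_prop
  have hw : ∀ x ∈ Ioo a b, HasDerivWithinAt (fun s => exp (c * s) * u s)
      (exp (c * x) * (u' x + c * u x)) (Ioi x) x := by
    intro x hx
    have hexp' : HasDerivAt (fun s => exp (c * s)) (exp (c * x) * c) x := by
      simpa using ((hasDerivAt_id x).const_mul c).exp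
    exact (hexp'.hasDerivWithinAt.mul (hu' x hx)).congr_deriv (by ring)
  have hmain := intervalIntegral.sub_le_integral_of_hasDeriv_right_of_le
    (g := fun s => exp (c * s) * u s) hab (hexp.mul hu) hw
    (hg.continuousOn_mul hexp isCompact_Icc)
    (fun x hx => mul_le_mul_of_nonneg_left (hle x hx) (exp_pos _).le)
  calc u b = exp (-c * b) * (exp (c * b) * u b) := by
        rw [← mul_assoc, ← exp_add]; simp
    _ ≤ exp (-c * b) * (exp (c * a) * u a + ∫ s in a..b, exp (c * s) * g s) := by
        gcongr; linarith
    _ = exp (-c * (b - a)) * u a + ∫ s in a..b, exp (-c * (b - s)) * g s := by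
        rw [mul_add, ← intervalIntegral.integral_const_mul, ← mul_assoc, ← exp_add]
        simp only [← mul_assoc, ← exp_add]
        ring_nf

theorem div_two_sqrt_add_sq_add_mul_sqrt_add_sq_le {e e' k β ε : ℝ} (he : 0 ≤ e) (hk : 0 ≤ k)
    (hβ : 0 ≤ β) (hε : 0 < ε) (h : e' + β * e ≤ k * √e) :
    e' / (2 * √(e + ε ^ 2)) + β / 2 * √(e + ε ^ 2) ≤ k / 2 + β / 2 * ε := by
  set f := √(e + ε ^ 2)
  have hf : 0 < f := sqrt_pos.2 (by positivity)
  have hf_sq : f ^ 2 = e + ε ^ 2 := sq_sqrt (by positivity)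
  have he_le : √e ≤ f := sqrt_le_sqrt (by nlinarith)
  have hε_le : ε ≤ f := by
    rw [← sqrt_sq hε.le]; exact sqrt_le_sqrt (by linarith)
  have hlhs : e' / (2 * f) + β / 2 * f = (e' + β * f ^ 2) / (2 * f) := by field_simp
  rw [hlhs, div_le_iff₀ (by positivity)]
  nlinarith [mul_le_mul_of_nonneg_left he_le hk,
    mul_le_mul_of_nonneg_left hε_le (mul_nonneg hβ hε.le)]

theorem intervalIntegral.integral_mul_div_two_add {f K : ℝ → ℝ} {a b c : ℝ}
    (hf : IntervalIntegrable f volume a b)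
    (hfK : IntervalIntegrable (fun s => f s * K s) volume a b) :
    ∫ s in a..b, f s * (K s / 2 + c) = 1 / 2 * (∫ s in a..b, f s * K s) + c * ∫ s in a..b, f s := by
  calc ∫ s in a..b, f s * (K s / 2 + c) = ∫ s in a..b, (1 / 2 * (f s * K s) + c * f s) := by
        congr 1 with s; ring
    _ = _ := by
        rw [intervalIntegral.integral_add (hfK.const_mul _) (hf.const_mul _),
          intervalIntegral.integral_const_mul, intervalIntegral.integral_const_mul]

theorem sqrt_add_sq_le_exp_mul_add_integral {β T ε : ℝ} (hβ : 0 ≤ β) (hε : 0 < ε)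
    {E E' K : ℝ → ℝ}
    (hE : ∀ t ∈ Icc (0:ℝ) T, HasDerivWithinAt E (E' t) (Icc 0 T) t)
    (hEnn : ∀ t ∈ Icc (0:ℝ) T, 0 ≤ E t)
    (hKcont : ContinuousOn K (Icc 0 T))
    (hKnn : ∀ t ∈ Icc (0:ℝ) T, 0 ≤ K t)
    (hineq : ∀ t ∈ Icc (0:ℝ) T, E' t + β * E t ≤ K t * √(E t)) {t : ℝ} (ht : t ∈ Icc 0 T) :
    √(E t + ε ^ 2) ≤ exp (-β * t / 2) * √(E 0 + ε ^ 2)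
      + ∫ s in (0:ℝ)..t, exp (-β * (t - s) / 2) * (K s / 2 + β / 2 * ε) := by
  have hsub : Icc 0 t ⊆ Icc 0 T := Icc_subset_Icc_right ht.2
  have hEcont : ContinuousOn E (Icc 0 T) := fun s hs => (hE s hs).continuousWithinAt
  have hderiv : ∀ x ∈ Ioo 0 t, HasDerivWithinAt (fun s => √(E s + ε ^ 2))
      (E' x / (2 * √(E x + ε ^ 2))) (Ioi x) x := by
    intro x hx
    have hE_pos : E x + ε ^ 2 ≠ 0 := by
      have := hEnn x (hsub (Ioo_subset_Icc_self hx)); positivity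
    have hE_at : HasDerivAt E (E' x) x :=
      (hE x (hsub (Ioo_subset_Icc_self hx))).hasDerivAt (Icc_mem_nhds hx.1 (hx.2.trans_le ht.2))
    exact ((hE_at.add_const (ε ^ 2)).sqrt hE_pos).hasDerivWithinAt
  have h := le_exp_mul_add_integral_of_deriv_add_mul_le (c := β / 2) (u := fun s => √(E s + ε ^ 2))
    (g := fun s => K s / 2 + β / 2 * ε) ht.1 ((hEcont.mono hsub).add continuousOn_const).sqrt hderiv
    (((hKcont.mono hsub).div_const 2).add continuousOn_const).integrableOn_Icc
    fun x hx => have hxT := hsub (Ioo_subset_Icc_self hx)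
      div_two_sqrt_add_sq_add_mul_sqrt_add_sq_le (hEnn x hxT) (hKnn x hxT) hβ hε (hineq x hxT)
  have hexponent : ∀ x, -(β / 2) * x = -β * x / 2 := fun x => by ring
  simpa only [hexponent, sub_zero] using h

theorem sqrt_gronwall_general (β T : ℝ) (hβ : 0 < β)
    (E E' K : ℝ → ℝ)
    (hE : ∀ t ∈ Icc (0:ℝ) T, HasDerivWithinAt E (E' t) (Icc 0 T) t)
    (hEnn : ∀ t ∈ Icc (0:ℝ) T, 0 ≤ E t)
    (hKcont : ContinuousOn K (Icc 0 T))
    (hKnn : ∀ t ∈ Icc (0:ℝ) T, 0 ≤ K t)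
    (hineq : ∀ t ∈ Icc (0:ℝ) T, E' t + β * E t ≤ K t * Real.sqrt (E t)) :
    ∀ t ∈ Icc (0:ℝ) T,
      Real.sqrt (E t) ≤ Real.exp (-β * t / 2) * Real.sqrt (E 0)
        + (1/2) * ∫ s in (0:ℝ)..t, Real.exp (-β * (t - s) / 2) * K s := by
  intro t ht
  have hexp : ContinuousOn (fun s => exp (-β * (t - s) / 2)) (uIcc 0 t) := by fun_prop
  have hK : ContinuousOn K (uIcc 0 t) :=
    hKcont.mono (uIcc_of_le ht.1 ▸ Icc_subset_Icc_right ht.2)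
  set I := ∫ s in (0:ℝ)..t, exp (-β * (t - s) / 2) * K s
  set J := ∫ s in (0:ℝ)..t, exp (-β * (t - s) / 2)
  have hlim : Tendsto (fun ε => exp (-β * t / 2) * √(E 0 + ε ^ 2) + (1 / 2 * I + β / 2 * ε * J))
      (𝓝[>] 0) (𝓝 (exp (-β * t / 2) * √(E 0) + 1 / 2 * I)) := by
    have hcont : Continuous fun ε =>
        exp (-β * t / 2) * √(E 0 + ε ^ 2) + (1 / 2 * I + β / 2 * ε * J) := by
      fun_prop
    simpa using (hcont.tendsto 0).mono_left nhdsWithin_le_nhds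
  refine ge_of_tendsto hlim (eventually_nhdsWithin_of_forall fun ε hε => ?_)
  calc √(E t) ≤ √(E t + ε ^ 2) := sqrt_le_sqrt (by nlinarith)
    _ ≤ _ := sqrt_add_sq_le_exp_mul_add_integral hβ.le hε hE hEnn hKcont hKnn hineq ht
    _ = _ := by
      rw [intervalIntegral.integral_mul_div_two_add hexp.intervalIntegrable
        (hexp.mul hK).intervalIntegrable]

/-- Gronwall-type inequality: if `E' + βE ≤ K√E` on `[0,T]` with `E ≥ 0`, `K ≥ 0`,
then `√E(t) ≤ e^{-βt/2}√E(0) + ½∫₀ᵗ e^{-β(t-s)/2} K(s) ds`. -/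
theorem sqrt_gronwall (β T : ℝ) (hβ : 0 < β) (hT : 0 < T)
    (E E' K : ℝ → ℝ)
    (hE : ∀ t ∈ Icc (0:ℝ) T, HasDerivWithinAt E (E' t) (Icc 0 T) t)
    (hE'cont : ContinuousOn E' (Icc 0 T))
    (hEnn : ∀ t ∈ Icc (0:ℝ) T, 0 ≤ E t)
    (hKcont : ContinuousOn K (Icc 0 T))
    (hKnn : ∀ t ∈ Icc (0:ℝ) T, 0 ≤ K t)
    (hineq : ∀ t ∈ Icc (0:ℝ) T, E' t + β * E t ≤ K t * Real.sqrt (E t)) :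
    ∀ t ∈ Icc (0:ℝ) T,
      Real.sqrt (E t) ≤ Real.exp (-β * t / 2) * Real.sqrt (E 0)
        + (1/2) * ∫ s in (0:ℝ)..t, Real.exp (-β * (t - s) / 2) * K s :=
  sqrt_gronwall_general β T hβ E E' K hE hEnn hKcont hKnn hineq
end

section
/- Let κ ∈ (0,3] and C₀ > 0, and let f ∈ C¹(ℝ;ℝ) satisfy |f'(s)| ≤ C₀(1+|s|^{4−κ}) for all s ∈ ℝ. Then there exists a constant C₁ > 0, depending only on C₀ and κ, such that for every τ ∈ (0,1] and every continuous curve u : [0,τ] → 𝒮(ℝ³;ℝ): ∫₀^τ ‖∇(f ∘ u(t))‖_{L²(ℝ³)} dt ≤ C₁ τ^{κ/4} ( 1 + ∫₀^τ (sup_{x∈ℝ³} |u(t,x)|)⁴ dt ) · sup_{t∈[0,τ]} ‖∇u(t)‖_{L²(ℝ³)}, where (f ∘ u(t))(x) := f(u(t,x)) and ∇ is the spatial gradient. -/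
/-!
By the chain rule, `‖∇(f ∘ u(t))‖ = |f'(u(t))| ‖∇u(t)‖ ≤ C₀ (1 + ‖u(t)‖_∞ ^ (4 - κ)) ‖∇u(t)‖`
pointwise, so at each time the `L²` norm of `∇(f ∘ u(t))` is at most
`C₀ (1 + ‖u(t)‖_∞ ^ (4 - κ)) · sup_t ‖∇u(t)‖_{L²}`. Splitting at `m = τ ^ (-1/4)` gives the
Young-type bound `m ^ (4 - κ) ≤ τ ^ (κ/4) m ^ 4 + τ ^ ((κ - 4)/4)`; integrated over `(0, τ]` the
last term contributes `τ · τ ^ ((κ - 4)/4) = τ ^ (κ/4)`, and the `1` contributes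
`τ ≤ τ ^ (κ/4)` since `τ ≤ 1`.

The supremum over `[0, τ]` is a genuine one (not the junk value of an unbounded `⨆` in `ℝ`), and
the time integrands are integrable, because `t ↦ ‖u(t)‖_∞` and `t ↦ ‖∇u(t)‖_{L²}` are continuous:
they factor through the continuous maps from Schwartz space to bounded continuous functions and
to `L²`.
-/

open MeasureTheory Real Set

noncomputable section

abbrev E3 : Type := EuclideanSpace ℝ (Fin 3)

open SchwartzMap

theorem le_ciSup₂_of_bddAbove_image {α β : Type*} [ConditionallyCompleteLattice α] {f : β → α}
    {s : Set β} (H : BddAbove (f '' s)) {c : β} (hc : c ∈ s) : f c ≤ ⨆ i ∈ s, f i :=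
  le_ciSup₂ (f := fun i (_ : i ∈ s) => f i)
    (H.mono <| iUnion_subset fun _ => range_subset_iff.2 fun hi => mem_image_of_mem f hi) c hc

lemma Real.rpow_le_rpow_sub_mul_rpow_add_rpow {a p l m : ℝ} (ha : 0 ≤ a) (hap : a ≤ p) (hl : 0 < l)
    (hm : 0 ≤ m) : m ^ a ≤ l ^ (a - p) * m ^ p + l ^ a := by
  rcases le_or_gt m l with hml | hlm
  · have : 0 ≤ l ^ (a - p) * m ^ p := by positivity
    linarith [rpow_le_rpow hm hml ha]
  · have hm' : 0 < m := hl.trans hlm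
    calc m ^ a = m ^ (a - p) * m ^ p := by rw [← rpow_add hm', sub_add_cancel]
      _ ≤ l ^ (a - p) * m ^ p :=
        mul_le_mul_of_nonneg_right (rpow_le_rpow_of_nonpos hl hlm.le (by linarith)) (by positivity)
      _ ≤ l ^ (a - p) * m ^ p + l ^ a := le_add_of_nonneg_right (by positivity)

lemma setIntegral_one_add_rpow_le {κ τ : ℝ} {M : ℝ → ℝ} (hκ : 0 ≤ κ) (hκ4 : κ ≤ 4) (hτ : 0 < τ)
    (hτ1 : τ ≤ 1) (hM : ∀ t, 0 ≤ M t) (hM4 : IntegrableOn (fun t => M t ^ 4) (Ioc 0 τ)) :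
    ∫ t in Ioc 0 τ, (1 + M t ^ (4 - κ)) ≤ 2 * τ ^ (κ / 4) * (1 + ∫ t in Ioc 0 τ, M t ^ 4) := by
  have young : ∀ t, M t ^ (4 - κ) ≤ τ ^ (κ / 4) * M t ^ 4 + τ ^ ((κ - 4) / 4) := by
    intro t
    have := rpow_le_rpow_sub_mul_rpow_add_rpow (a := 4 - κ) (p := 4) (l := τ ^ (-(1 / 4) : ℝ))
      (by linarith) (by linarith) (by positivity) (hM t)
    rwa [← rpow_mul hτ.le, ← rpow_mul hτ.le, rpow_ofNat,
      show -(1 / 4) * (4 - κ - 4) = κ / 4 by ring,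
      show -(1 / 4) * (4 - κ) = (κ - 4) / 4 by ring] at this
  have hτκ : τ * τ ^ ((κ - 4) / 4) = τ ^ (κ / 4) := by
    calc τ * τ ^ ((κ - 4) / 4) = τ ^ (1 + (κ - 4) / 4) := by rw [rpow_add hτ, rpow_one]
      _ = τ ^ (κ / 4) := by ring_nf
  have hτ_le : τ ≤ τ ^ (κ / 4) :=
    self_le_rpow_of_le_one hτ.le hτ1 (by linarith)
  have hI : 0 ≤ τ ^ (κ / 4) * ∫ t in Ioc 0 τ, M t ^ 4 :=
    mul_nonneg (by positivity) (setIntegral_nonneg measurableSet_Ioc fun t _ => by positivity)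
  calc ∫ t in Ioc 0 τ, (1 + M t ^ (4 - κ))
      ≤ ∫ t in Ioc 0 τ, ((1 + τ ^ ((κ - 4) / 4)) + τ ^ (κ / 4) * M t ^ 4) :=
        integral_mono_of_nonneg (ae_of_all _ fun t => add_nonneg zero_le_one (rpow_nonneg (hM t) _))
          ((integrable_const _).add (hM4.const_mul _))
          (ae_of_all _ fun t => by linarith [young t])
    _ = τ + τ ^ (κ / 4) + τ ^ (κ / 4) * ∫ t in Ioc 0 τ, M t ^ 4 := by
        rw [integral_add (integrable_const _) (hM4.const_mul _),
          setIntegral_const, integral_const_mul, Real.volume_real_Ioc_of_le hτ.le, sub_zero,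
          smul_eq_mul, mul_add, mul_one, hτκ]
    _ ≤ 2 * τ ^ (κ / 4) * (1 + ∫ t in Ioc 0 τ, M t ^ 4) := by linarith

lemma norm_fderiv_comp_eq {E : Type*} [NormedAddCommGroup E] [NormedSpace ℝ E] {f : ℝ → ℝ}
    {g : E → ℝ} {x : E} (hf : DifferentiableAt ℝ f (g x)) (hg : DifferentiableAt ℝ g x) :
    ‖fderiv ℝ (fun y => f (g y)) x‖ = |deriv f (g x)| * ‖fderiv ℝ g x‖ := by
  rw [show (fun y => f (g y)) = f ∘ g from rfl,
    (hf.hasDerivAt.comp_hasFDerivAt x hg.hasFDerivAt).fderiv, norm_smul, norm_eq_abs]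

lemma sqrt_integral_norm_sq_le_of_norm_le {α F G : Type*} [MeasurableSpace α] {μ : Measure α}
    [NormedAddCommGroup F] [NormedAddCommGroup G] {φ : α → F} {ψ : α → G} {c : ℝ} (hc : 0 ≤ c)
    (hψ : Integrable (fun x => ‖ψ x‖ ^ 2) μ) (h : ∀ x, ‖φ x‖ ≤ c * ‖ψ x‖) :
    √(∫ x, ‖φ x‖ ^ 2 ∂μ) ≤ c * √(∫ x, ‖ψ x‖ ^ 2 ∂μ) := by
  have hsq : ∫ x, ‖φ x‖ ^ 2 ∂μ ≤ c ^ 2 * ∫ x, ‖ψ x‖ ^ 2 ∂μ := by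
    rw [← integral_const_mul]
    refine integral_mono_of_nonneg (ae_of_all _ fun x => by positivity) (hψ.const_mul _)
      (ae_of_all _ fun x => ?_)
    simpa only [mul_pow] using pow_le_pow_left₀ (norm_nonneg _) (h x) 2
  calc √(∫ x, ‖φ x‖ ^ 2 ∂μ) ≤ √(c ^ 2 * ∫ x, ‖ψ x‖ ^ 2 ∂μ) := sqrt_le_sqrt hsq
    _ = c * √(∫ x, ‖ψ x‖ ^ 2 ∂μ) := by rw [sqrt_mul (sq_nonneg c), sqrt_sq hc]

namespace SchwartzMap

variable {E F : Type*} [NormedAddCommGroup E] [NormedSpace ℝ E] [NormedAddCommGroup F]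
  [NormedSpace ℝ F]

lemma iSup_norm_eq_norm_toBoundedContinuousFunction (g : 𝓢(E, F)) :
    ⨆ x, ‖g x‖ = ‖g.toBoundedContinuousFunction‖ := by
  rw [BoundedContinuousFunction.norm_eq_iSup_norm]
  rfl

lemma norm_le_iSup_norm (g : 𝓢(E, F)) (x : E) : ‖g x‖ ≤ ⨆ y, ‖g y‖ := by
  rw [iSup_norm_eq_norm_toBoundedContinuousFunction]
  exact g.toBoundedContinuousFunction.norm_coe_le_norm x

lemma continuous_iSup_norm : Continuous fun g : 𝓢(E, F) => ⨆ x, ‖g x‖ := by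
  simp_rw [iSup_norm_eq_norm_toBoundedContinuousFunction]
  exact (toBoundedContinuousFunctionCLM ℝ E F).continuous.norm

variable [MeasurableSpace E] [BorelSpace E] [SecondCountableTopology E] {μ : Measure E}
  [μ.HasTemperateGrowth]

lemma sqrt_integral_norm_sq_eq_norm_toLp (g : 𝓢(E, F)) :
    √(∫ x, ‖g x‖ ^ 2 ∂μ) = ‖g.toLp 2 μ‖ := by
  rw [norm_toLp' two_ne_zero ENNReal.ofNat_ne_top, sqrt_eq_rpow]
  norm_num

lemma integrable_norm_fderiv_sq (g : 𝓢(E, F)) :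
    Integrable (fun x => ‖fderiv ℝ g x‖ ^ 2) μ := by
  simpa only [fderivCLM_apply] using ((fderivCLM ℝ E F g).memLp 2 μ).integrable_norm_pow two_ne_zero

lemma sqrt_integral_norm_fderiv_comp_sq_le {f : ℝ → ℝ} (hf : Differentiable ℝ f) (g : 𝓢(E, ℝ))
    {c : ℝ} (hfc : ∀ x, |deriv f (g x)| ≤ c) :
    √(∫ x, ‖fderiv ℝ (fun y => f (g y)) x‖ ^ 2 ∂μ) ≤ c * √(∫ x, ‖fderiv ℝ g x‖ ^ 2 ∂μ) :=
  sqrt_integral_norm_sq_le_of_norm_le ((abs_nonneg _).trans (hfc 0)) (integrable_norm_fderiv_sq g)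
    fun x => by
      rw [norm_fderiv_comp_eq (hf _) (g.differentiableAt)]
      exact mul_le_mul_of_nonneg_right (hfc x) (norm_nonneg _)

lemma sqrt_integral_norm_fderiv_comp_sq_le_of_abs_deriv_le {f : ℝ → ℝ} (hf : Differentiable ℝ f)
    {C p : ℝ} (hC : 0 ≤ C) (hp : 0 ≤ p) (hf' : ∀ s, |deriv f s| ≤ C * (1 + |s| ^ p))
    (g : 𝓢(E, ℝ)) :
    √(∫ x, ‖fderiv ℝ (fun y => f (g y)) x‖ ^ 2 ∂μ)
      ≤ C * (1 + (⨆ x, ‖g x‖) ^ p) * √(∫ x, ‖fderiv ℝ g x‖ ^ 2 ∂μ) :=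
  sqrt_integral_norm_fderiv_comp_sq_le hf g fun x =>
    (hf' _).trans <| mul_le_mul_of_nonneg_left
      (add_le_add_right (rpow_le_rpow (abs_nonneg _) (g.norm_le_iSup_norm x) hp) 1) hC

lemma continuous_sqrt_integral_norm_fderiv_sq :
    Continuous fun g : 𝓢(E, F) => √(∫ x, ‖fderiv ℝ g x‖ ^ 2 ∂μ) := by
  simp_rw [← fderivCLM_apply ℝ, sqrt_integral_norm_sq_eq_norm_toLp]
  exact (continuous_toLp.comp (fderivCLM ℝ E F).continuous).norm

end SchwartzMap

/-- Estimate of the `L¹(0,τ;Ḣ¹)`-norm of the composition `f(u)` through the Strichartz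
norm `L⁴(0,τ;L^∞)` and the energy norm `L^∞(0,τ;Ḣ¹)` of `u`, for a nonlinearity whose
derivative has growth of order `4-κ`. -/
theorem composition_H1_estimate (κ C₀ : ℝ) (hκ : 0 < κ) (hκ' : κ ≤ 3) (hC₀ : 0 < C₀) :
    ∃ C₁ : ℝ, 0 < C₁ ∧
      ∀ f : ℝ → ℝ, ContDiff ℝ 1 f →
        (∀ s : ℝ, |deriv f s| ≤ C₀ * (1 + |s| ^ (4 - κ))) →
        ∀ τ : ℝ, 0 < τ → τ ≤ 1 →
        ∀ u : ℝ → SchwartzMap E3 ℝ, ContinuousOn u (Icc 0 τ) →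
          (∫ t in Ioc (0:ℝ) τ,
              (∫ x : E3, ‖fderiv ℝ (fun y => f (u t y)) x‖ ^ 2) ^ ((1:ℝ)/2))
            ≤ C₁ * τ ^ (κ/4) * (1 + ∫ t in Ioc (0:ℝ) τ, (⨆ x : E3, |u t x|) ^ 4)
              * ⨆ t ∈ Icc (0:ℝ) τ,
                  (∫ x : E3, ‖fderiv ℝ (fun y : E3 => u t y) x‖ ^ 2) ^ ((1:ℝ)/2) := by
  refine ⟨2 * C₀, by positivity, fun f hf hf' τ hτ hτ1 u hu => ?_⟩
  simp only [← sqrt_eq_rpow, ← Real.norm_eq_abs]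
  set M : ℝ → ℝ := fun t => ⨆ x, ‖u t x‖
  set S := ⨆ t ∈ Icc (0:ℝ) τ, √(∫ x : E3, ‖fderiv ℝ (fun y => u t y) x‖ ^ 2)
  have hMcont : ContinuousOn M (Icc 0 τ) := continuous_iSup_norm.comp_continuousOn hu
  have hM0 (t : ℝ) : 0 ≤ M t := Real.iSup_nonneg fun _ => norm_nonneg _
  have hBS : ∀ t ∈ Icc 0 τ, √(∫ x : E3, ‖fderiv ℝ (u t) x‖ ^ 2) ≤ S := fun t ht =>
    le_ciSup₂_of_bddAbove_image (isCompact_Icc.bddAbove_image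
      (continuous_sqrt_integral_norm_fderiv_sq.comp_continuousOn hu)) ht
  have hS : 0 ≤ S := (sqrt_nonneg _).trans (hBS 0 ⟨le_rfl, hτ.le⟩)
  have hpointwise (t : ℝ) (ht : t ∈ Ioc 0 τ) :
      √(∫ x : E3, ‖fderiv ℝ (fun y => f (u t y)) x‖ ^ 2) ≤ C₀ * S * (1 + M t ^ (4 - κ)) := by
    have := hM0 t
    refine (sqrt_integral_norm_fderiv_comp_sq_le_of_abs_deriv_le (hf.differentiable one_ne_zero)
      hC₀.le (by linarith) hf' (u t)).trans ?_
    grw [hBS t (Ioc_subset_Icc_self ht)]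
    exact (mul_right_comm _ _ _).le
  have hint : IntegrableOn (fun t => C₀ * S * (1 + M t ^ (4 - κ))) (Ioc 0 τ) :=
    (continuousOn_const.mul (continuousOn_const.add
      (hMcont.rpow_const fun _ _ => Or.inr (by linarith)))).integrableOn_Icc.mono_set
      Ioc_subset_Icc_self
  calc _ ≤ ∫ t in Ioc 0 τ, C₀ * S * (1 + M t ^ (4 - κ)) :=
        integral_mono_of_nonneg (ae_of_all _ fun _ => sqrt_nonneg _) hint
          ((ae_restrict_iff' measurableSet_Ioc).2 (ae_of_all _ hpointwise))
    _ = C₀ * S * ∫ t in Ioc 0 τ, (1 + M t ^ (4 - κ)) := integral_const_mul _ _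
    _ ≤ C₀ * S * (2 * τ ^ (κ / 4) * (1 + ∫ t in Ioc 0 τ, M t ^ 4)) := by
        gcongr
        exact setIntegral_one_add_rpow_le hκ.le (by linarith) hτ hτ1 hM0
          ((hMcont.pow 4).integrableOn_Icc.mono_set Ioc_subset_Icc_self)
    _ = _ := by ring
end
end

section
/- Let X be a metric space and let S : [0,∞) → X → X satisfy S(0) = id, S(t+s) = S(t) ∘ S(s) for all t,s ≥ 0, and each map S(t) : X → X is continuous. Assume: (i) there is a bounded set B ⊆ X that attracts bounded sets, i.e. for every bounded B' ⊆ X and every ε > 0 there is T ≥ 0 such that S(t)(B') is contained in the ε-thickening of B for all t ≥ T; (ii) S is asymptotically compact, i.e. for every bounded B' ⊆ X, every sequence (xₙ) in B' and every sequence tₙ → ∞, the sequence (S(tₙ)(xₙ)) has a convergent subsequence. Then there exists a set 𝒜 ⊆ X such that: 𝒜 is compact; 𝒜 is strictly invariant, S(t)(𝒜) = 𝒜 for all t ≥ 0; 𝒜 attracts bounded sets (for every bounded B' and every ε > 0 there is T with S(t)(B') contained in the ε-thickening of 𝒜 for all t ≥ T); and 𝒜 = { u(0) : u : ℝ → X has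 bounded range and u(t+h) = S(h)(u(t)) for all t ∈ ℝ and h ≥ 0 }. -/
/-!
The attractor is the ω-limit set `ω⁺ S B`. The key fact is that every limit `y` of `S tₙ xₙ`,
with `xₙ` in a bounded set attracted by `B` and `tₙ → ∞`, lies in `ω⁺ S B`: for each `T ≥ 0`,
asymptotic compactness gives a limit `z` of a subsequence of `S (tₙ - T) xₙ`, attraction puts `z`
in `closure B`, and `y = S T z`. Compactness (diagonal sequences), backward invariance (the same
`z` with `T = t`) and attraction (by contradiction) all follow. A bounded complete trajectory
passes through `ω⁺ S B` since `u 0 = S n (u (-n))`; conversely, backward orbits of `S 1` inside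
the invariant set `ω⁺ S B` extend to complete trajectories.
-/

open Set Filter Bornology

open Metric Topology omegaLimit

structure IsContinuousSemigroup {X : Type*} [TopologicalSpace X] (S : ℝ → X → X) : Prop where
  map_add : ∀ t ≥ (0:ℝ), ∀ s ≥ (0:ℝ), ∀ x : X, S (t + s) x = S t (S s x)
  continuous : ∀ t ≥ (0:ℝ), Continuous (S t)

def IsCompleteTrajectory {X : Type*} (S : ℝ → X → X) (u : ℝ → X) : Prop :=
  ∀ t : ℝ, ∀ h ≥ (0:ℝ), u (t + h) = S h (u t)

def IsAsymptoticLimit {α β : Type*} [TopologicalSpace β] (ϕ : ℝ → α → β) (s : Set α) (y : β) :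
    Prop :=
  ∃ x : ℕ → α, (∀ n, x n ∈ s) ∧ ∃ ts : ℕ → ℝ, Tendsto ts atTop atTop ∧
    Tendsto (fun n => ϕ (ts n) (x n)) atTop (𝓝 y)

theorem exists_seq_dist_tendsto_zero_of_mem_omegaLimit {α β : Type*} [PseudoMetricSpace β]
    {ϕ : ℝ → α → β} {s : Set α} {y : ℕ → β} (hy : ∀ k, y k ∈ ω⁺ ϕ s) :
    ∃ x : ℕ → α, (∀ k, x k ∈ s) ∧ ∃ ts : ℕ → ℝ, Tendsto ts atTop atTop ∧
      Tendsto (fun k => dist (ϕ (ts k) (x k)) (y k)) atTop (𝓝 0) := by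
  have hnear : ∀ k : ℕ, ∃ t, (k : ℝ) ≤ t ∧ ∃ x ∈ s, dist (ϕ t x) (y k) < 1 / (k + 1) := by
    intro k
    have := (mem_omegaLimit_iff_frequently₂ _ _ _ _).1 (hy k) _
      (ball_mem_nhds (y k) (Nat.one_div_pos_of_nat (α := ℝ) (n := k)))
    obtain ⟨t, hkt, _, ⟨x, hx, rfl⟩, hdist⟩ := frequently_atTop.1 this k
    exact ⟨t, hkt, x, hx, hdist⟩
  choose ts hts x hx hdist using hnear
  exact ⟨x, hx, ts, tendsto_atTop_mono hts tendsto_natCast_atTop_atTop,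
    squeeze_zero (fun _ => dist_nonneg) (fun k => (hdist k).le)
      tendsto_one_div_add_atTop_nhds_zero_nat⟩

theorem IsAsymptoticLimit.of_mem_omegaLimit {α β : Type*} [PseudoMetricSpace β]
    {ϕ : ℝ → α → β} {s : Set α} {y : β} (hy : y ∈ ω⁺ ϕ s) : IsAsymptoticLimit ϕ s y := by
  obtain ⟨x, hx, ts, hts, hdist⟩ :=
    exists_seq_dist_tendsto_zero_of_mem_omegaLimit (y := fun _ => y) fun _ => hy
  exact ⟨x, hx, ts, hts, tendsto_iff_dist_tendsto_zero.2 hdist⟩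

theorem IsContinuousSemigroup.mapsTo_omegaLimit {X : Type*} [TopologicalSpace X]
    {S : ℝ → X → X} (hS : IsContinuousSemigroup S) (s : Set X) {t : ℝ} (ht : 0 ≤ t) :
    MapsTo (S t) (ω⁺ S s) (ω⁺ S s) := by
  have h := mapsTo_omegaLimit' (f := atTop) (ϕ' := fun τ => S (t + τ)) s (mapsTo_id s)
    ((eventually_ge_atTop 0).mono fun τ hτ x _ => (hS.map_add t ht τ hτ x).symm)
    (hS.continuous t ht)
  exact h.mono_right <|
    omegaLimit_subset_of_tendsto S s (tendsto_atTop_add_const_left _ t tendsto_id)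

section BackwardExtension

variable {X : Type*} {S : ℝ → X → X}

theorem exists_backward_orbit {A : Set X} (hA : A ⊆ S 1 '' A) {a : X} (ha : a ∈ A) :
    ∃ b : ℕ → X, b 0 = a ∧ (∀ n, b n ∈ A) ∧ ∀ n, S 1 (b (n + 1)) = b n := by
  choose! F hFA hF using fun y (hy : y ∈ A) => hA hy
  refine ⟨fun n => F^[n] a, rfl, fun n => (MapsTo.iterate hFA n) ha, fun n => ?_⟩
  change S 1 (F^[n + 1] a) = F^[n] a
  rw [Function.iterate_succ_apply']
  exact hF _ ((MapsTo.iterate hFA n) ha)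

noncomputable def backwardExtension (S : ℝ → X → X) (b : ℕ → X) (t : ℝ) : X :=
  S (t + ⌈-t⌉₊) (b ⌈-t⌉₊)

theorem map_add_natCast_eq_of_le
    (hsemi : ∀ t ≥ (0:ℝ), ∀ s ≥ (0:ℝ), ∀ x : X, S (t + s) x = S t (S s x))
    {b : ℕ → X} (hb : ∀ n, S 1 (b (n + 1)) = b n) {t : ℝ} {m n : ℕ} (hmn : m ≤ n)
    (ht : 0 ≤ t + m) :
    S (t + n) (b n) = S (t + m) (b m) := by
  induction n, hmn using Nat.le_induction with
  | base => rfl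
  | succ n hmn ih =>
    have htn : 0 ≤ t + n := ht.trans (by gcongr)
    rw [Nat.cast_succ, ← add_assoc, hsemi _ htn 1 zero_le_one, hb, ih]

theorem backwardExtension_eq
    (hsemi : ∀ t ≥ (0:ℝ), ∀ s ≥ (0:ℝ), ∀ x : X, S (t + s) x = S t (S s x))
    {b : ℕ → X} (hb : ∀ n, S 1 (b (n + 1)) = b n) {t : ℝ} {n : ℕ} (ht : 0 ≤ t + n) :
    backwardExtension S b t = S (t + n) (b n) := by
  have hceil : 0 ≤ t + ⌈-t⌉₊ := by linarith [Nat.le_ceil (-t)]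
  rcases le_total n ⌈-t⌉₊ with h | h
  · exact map_add_natCast_eq_of_le hsemi hb h ht
  · exact (map_add_natCast_eq_of_le hsemi hb h hceil).symm

theorem isCompleteTrajectory_backwardExtension
    (hsemi : ∀ t ≥ (0:ℝ), ∀ s ≥ (0:ℝ), ∀ x : X, S (t + s) x = S t (S s x))
    {b : ℕ → X} (hb : ∀ n, S 1 (b (n + 1)) = b n) :
    IsCompleteTrajectory S (backwardExtension S b) := by
  intro t h hh
  have hceil : 0 ≤ t + ⌈-t⌉₊ := by linarith [Nat.le_ceil (-t)]
  rw [backwardExtension_eq hsemi hb (by linarith : 0 ≤ t + h + ⌈-t⌉₊),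
    show t + h + ⌈-t⌉₊ = h + (t + ⌈-t⌉₊) by ring, hsemi h hh _ hceil]
  rfl

theorem backwardExtension_zero
    (hsemi : ∀ t ≥ (0:ℝ), ∀ s ≥ (0:ℝ), ∀ x : X, S (t + s) x = S t (S s x))
    {b : ℕ → X} (hb : ∀ n, S 1 (b (n + 1)) = b n) : backwardExtension S b 0 = b 0 := by
  rw [backwardExtension_eq hsemi hb (n := 1) (by norm_num), zero_add, Nat.cast_one, hb]

theorem range_backwardExtension_subset {A : Set X} (hA : ∀ t ≥ (0:ℝ), MapsTo (S t) A A)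
    {b : ℕ → X} (hb : ∀ n, b n ∈ A) : range (backwardExtension S b) ⊆ A := by
  rintro _ ⟨t, rfl⟩
  exact hA _ (by linarith [Nat.le_ceil (-t)]) (hb _)

theorem exists_isCompleteTrajectory_of_image_eq
    (hsemi : ∀ t ≥ (0:ℝ), ∀ s ≥ (0:ℝ), ∀ x : X, S (t + s) x = S t (S s x))
    {A : Set X} (hA : ∀ t ≥ (0:ℝ), S t '' A = A) {a : X} (ha : a ∈ A) :
    ∃ u, range u ⊆ A ∧ IsCompleteTrajectory S u ∧ u 0 = a := by
  obtain ⟨b, rfl, hbA, hb⟩ := exists_backward_orbit (hA 1 zero_le_one).ge ha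
  exact ⟨backwardExtension S b,
    range_backwardExtension_subset (fun t ht => mapsTo_iff_image_subset.2 (hA t ht).subset) hbA,
    isCompleteTrajectory_backwardExtension hsemi hb, backwardExtension_zero hsemi hb⟩

end BackwardExtension

section Attractor

variable {X : Type*} [MetricSpace X] {S : ℝ → X → X}

def IsAsymptoticallyCompact (S : ℝ → X → X) : Prop :=
  ∀ B' : Set X, IsBounded B' → ∀ x : ℕ → X, (∀ n, x n ∈ B') →
    ∀ ts : ℕ → ℝ, (∀ n, 0 ≤ ts n) → Tendsto ts atTop atTop →
    ∃ φ : ℕ → ℕ, StrictMono φ ∧ ∃ y, Tendsto (fun n => S (ts (φ n)) (x (φ n))) atTop (𝓝 y)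

def Attracts (S : ℝ → X → X) (A B' : Set X) : Prop :=
  ∀ ε > (0:ℝ), ∃ T ≥ (0:ℝ), ∀ t ≥ T, S t '' B' ⊆ thickening ε A

theorem IsAsymptoticallyCompact.exists_subseq_tendsto (hS : IsAsymptoticallyCompact S)
    {B' : Set X} (hB' : IsBounded B') {x : ℕ → X} (hx : ∀ n, x n ∈ B') {ts : ℕ → ℝ}
    (hts : Tendsto ts atTop atTop) :
    ∃ φ : ℕ → ℕ, StrictMono φ ∧ ∃ y, Tendsto (fun n => S (ts (φ n)) (x (φ n))) atTop (𝓝 y) := by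
  obtain ⟨N, hN⟩ := eventually_atTop.1 (hts.eventually_ge_atTop 0)
  obtain ⟨φ, hφ, y, hy⟩ := hS B' hB' (fun n => x (n + N)) (fun n => hx _) (fun n => ts (n + N))
    (fun n => hN _ (Nat.le_add_left N n)) (hts.comp (tendsto_add_atTop_nat N))
  exact ⟨(· + N) ∘ φ, (strictMono_id.add_const N).comp hφ, y, hy⟩

theorem IsAsymptoticLimit.mem_closure_of_attracts {A B' : Set X} {y : X}
    (hy : IsAsymptoticLimit S B' y) (hA : Attracts S A B') : y ∈ closure A := by
  obtain ⟨x, hx, ts, hts, hxy⟩ := hy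
  rw [closure_eq_iInter_cthickening]
  refine mem_iInter₂.2 fun ε hε => closure_thickening_subset_cthickening ε A ?_
  obtain ⟨T, -, hT⟩ := hA ε hε
  exact mem_closure_of_tendsto hxy
    ((hts.eventually_ge_atTop T).mono fun n hn => hT _ hn (mem_image_of_mem _ (hx n)))

theorem IsAsymptoticLimit.exists_eq_map (hS : IsContinuousSemigroup S)
    (hAC : IsAsymptoticallyCompact S) {B' : Set X} (hB' : IsBounded B') {y : X}
    (hy : IsAsymptoticLimit S B' y) {t : ℝ} (ht : 0 ≤ t) :
    ∃ z, IsAsymptoticLimit S B' z ∧ S t z = y := by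
  obtain ⟨x, hx, ts, hts, hxy⟩ := hy
  have hts' : Tendsto (fun n => ts n - t) atTop atTop := by
    simpa only [sub_eq_add_neg] using tendsto_atTop_add_const_right _ (-t) hts
  obtain ⟨φ, hφ, z, hz⟩ := hAC.exists_subseq_tendsto hB' hx hts'
  refine ⟨z, ⟨_, fun n => hx (φ n), _, hts'.comp hφ.tendsto_atTop, hz⟩, ?_⟩
  have hmap : Tendsto (fun n => S t (S (ts (φ n) - t) (x (φ n)))) atTop (𝓝 (S t z)) :=
    ((hS.continuous t ht).tendsto z).comp hz
  refine tendsto_nhds_unique (hmap.congr' ?_) (hxy.comp hφ.tendsto_atTop)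
  filter_upwards [(hts'.comp hφ.tendsto_atTop).eventually_ge_atTop 0]
    with n (hn : 0 ≤ ts (φ n) - t)
  rw [← hS.map_add t ht _ hn, add_sub_cancel, Function.comp_apply]

theorem IsAsymptoticLimit.mem_omegaLimit (hS : IsContinuousSemigroup S)
    (hAC : IsAsymptoticallyCompact S) {B B' : Set X} (hB' : IsBounded B') (hBB' : Attracts S B B')
    {y : X} (hy : IsAsymptoticLimit S B' y) : y ∈ ω⁺ S B := by
  refine mem_iInter₂.2 fun u hu => ?_
  obtain ⟨T, hT⟩ := mem_atTop_sets.1 hu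
  obtain ⟨z, hz, rfl⟩ := hy.exists_eq_map hS hAC hB' (le_max_right T 0)
  have hzB : z ∈ closure B := hz.mem_closure_of_attracts hBB'
  have hSB : S (max T 0) '' B ⊆ image2 S u B := image_subset_image2_right (hT _ (le_max_left T 0))
  exact closure_mono hSB <|
    image_closure_subset_closure_image (hS.continuous _ (le_max_right T 0)) ⟨z, hzB, rfl⟩

theorem isCompact_omegaLimit (hS : IsContinuousSemigroup S) (hAC : IsAsymptoticallyCompact S)
    {B : Set X} (hB : IsBounded B) (hBB : Attracts S B B) : IsCompact (ω⁺ S B) := by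
  refine IsSeqCompact.isCompact fun y hy => ?_
  obtain ⟨x, hx, ts, hts, hdist⟩ := exists_seq_dist_tendsto_zero_of_mem_omegaLimit hy
  obtain ⟨φ, hφ, z, hz⟩ := hAC.exists_subseq_tendsto hB hx hts
  have hzω : z ∈ ω⁺ S B := IsAsymptoticLimit.mem_omegaLimit hS hAC hB hBB
    ⟨_, fun n => hx (φ n), _, hts.comp hφ.tendsto_atTop, hz⟩
  exact ⟨z, hzω, φ, hφ, hz.congr_dist (hdist.comp hφ.tendsto_atTop)⟩

theorem image_omegaLimit_eq (hS : IsContinuousSemigroup S) (hAC : IsAsymptoticallyCompact S)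
    {B : Set X} (hB : IsBounded B) (hBB : Attracts S B B) {t : ℝ} (ht : 0 ≤ t) :
    S t '' ω⁺ S B = ω⁺ S B := by
  refine (hS.mapsTo_omegaLimit B ht).image_subset.antisymm fun y hy => ?_
  obtain ⟨z, hz, rfl⟩ := (IsAsymptoticLimit.of_mem_omegaLimit hy).exists_eq_map hS hAC hB ht
  exact ⟨z, hz.mem_omegaLimit hS hAC hB hBB, rfl⟩

theorem attracts_omegaLimit (hS : IsContinuousSemigroup S) (hAC : IsAsymptoticallyCompact S)
    {B B' : Set X} (hB' : IsBounded B') (hBB' : Attracts S B B') : Attracts S (ω⁺ S B) B' := by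
  intro ε hε
  by_contra! hfar
  have hseq : ∀ n : ℕ, ∃ t ≥ (n : ℝ), ∃ x ∈ B', S t x ∉ thickening ε (ω⁺ S B) := by
    intro n
    obtain ⟨t, ht, hsub⟩ := hfar n n.cast_nonneg
    obtain ⟨_, ⟨x, hx, rfl⟩, hSx⟩ := not_subset.1 hsub
    exact ⟨t, ht, x, hx, hSx⟩
  choose ts hts x hx hSx using hseq
  have hts_top := tendsto_atTop_mono hts tendsto_natCast_atTop_atTop
  obtain ⟨φ, hφ, z, hz⟩ := hAC.exists_subseq_tendsto hB' hx hts_top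
  have hzω : z ∈ ω⁺ S B := IsAsymptoticLimit.mem_omegaLimit hS hAC hB' hBB'
    ⟨_, fun n => hx (φ n), _, hts_top.comp hφ.tendsto_atTop, hz⟩
  obtain ⟨n, hn⟩ := (hz.eventually (isOpen_thickening.mem_nhds
    (self_subset_thickening hε _ hzω))).exists
  exact hSx (φ n) hn

theorem IsCompleteTrajectory.mem_omegaLimit (hS : IsContinuousSemigroup S)
    (hAC : IsAsymptoticallyCompact S) {B : Set X} {u : ℝ → X} (hu : IsCompleteTrajectory S u)
    (hbdd : IsBounded (range u)) (hBu : Attracts S B (range u)) : u 0 ∈ ω⁺ S B := by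
  refine IsAsymptoticLimit.mem_omegaLimit hS hAC hbdd hBu
    ⟨fun n => u (-n), fun n => mem_range_self _, _, tendsto_natCast_atTop_atTop, ?_⟩
  refine tendsto_const_nhds.congr fun n => ?_
  rw [← hu _ _ n.cast_nonneg, neg_add_cancel]

end Attractor

theorem global_attractor_existence_general {X : Type*} [MetricSpace X]
    (S : ℝ → X → X)
    (hsemi : ∀ t ≥ (0:ℝ), ∀ s ≥ (0:ℝ), ∀ x : X, S (t + s) x = S t (S s x))
    (hcont : ∀ t ≥ (0:ℝ), Continuous (S t))
    (B : Set X) (hB : IsBounded B)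
    (habsorb : ∀ B' : Set X, IsBounded B' → ∀ ε > (0:ℝ),
      ∃ T ≥ (0:ℝ), ∀ t ≥ T, S t '' B' ⊆ Metric.thickening ε B)
    (hasympt : ∀ B' : Set X, IsBounded B' →
      ∀ x : ℕ → X, (∀ n, x n ∈ B') →
      ∀ ts : ℕ → ℝ, (∀ n, 0 ≤ ts n) → Tendsto ts atTop atTop →
      ∃ φ : ℕ → ℕ, StrictMono φ ∧
        ∃ y : X, Tendsto (fun n => S (ts (φ n)) (x (φ n))) atTop (nhds y)) :
    ∃ A : Set X,
      IsCompact A ∧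
      (∀ t ≥ (0:ℝ), S t '' A = A) ∧
      (∀ B' : Set X, IsBounded B' → ∀ ε > (0:ℝ),
        ∃ T ≥ (0:ℝ), ∀ t ≥ T, S t '' B' ⊆ Metric.thickening ε A) ∧
      A = {a : X | ∃ u : ℝ → X, IsBounded (range u) ∧
        (∀ t : ℝ, ∀ h ≥ (0:ℝ), u (t + h) = S h (u t)) ∧ u 0 = a} := by
  have hS : IsContinuousSemigroup S := ⟨hsemi, hcont⟩
  have hcpt := isCompact_omegaLimit hS hasympt hB (habsorb B hB)
  have hinv : ∀ t ≥ (0:ℝ), S t '' ω⁺ S B = ω⁺ S B :=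
    fun t ht => image_omegaLimit_eq hS hasympt hB (habsorb B hB) ht
  refine ⟨ω⁺ S B, hcpt, hinv,
    fun B' hB' => attracts_omegaLimit hS hasympt hB' (habsorb B' hB'), Set.ext fun a => ⟨?_, ?_⟩⟩
  · intro ha
    obtain ⟨u, hu_range, hu, rfl⟩ := exists_isCompleteTrajectory_of_image_eq hsemi hinv ha
    exact ⟨u, hcpt.isBounded.subset hu_range, hu, rfl⟩
  · rintro ⟨u, hbdd, hu, rfl⟩
    exact IsCompleteTrajectory.mem_omegaLimit hS hasympt hu hbdd (habsorb _ hbdd)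

/-- Existence of the global attractor: a semigroup of continuous maps on a metric space
possessing a bounded attracting set and being asymptotically compact has a global
attractor, which is generated by all complete bounded trajectories. -/
theorem global_attractor_existence {X : Type*} [MetricSpace X]
    (S : ℝ → X → X)
    (hid : ∀ x : X, S 0 x = x)
    (hsemi : ∀ t ≥ (0:ℝ), ∀ s ≥ (0:ℝ), ∀ x : X, S (t + s) x = S t (S s x))
    (hcont : ∀ t ≥ (0:ℝ), Continuous (S t))
    (B : Set X) (hB : IsBounded B)
    (habsorb : ∀ B' : Set X, IsBounded B' → ∀ ε > (0:ℝ),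
      ∃ T ≥ (0:ℝ), ∀ t ≥ T, S t '' B' ⊆ Metric.thickening ε B)
    (hasympt : ∀ B' : Set X, IsBounded B' →
      ∀ x : ℕ → X, (∀ n, x n ∈ B') →
      ∀ ts : ℕ → ℝ, (∀ n, 0 ≤ ts n) → Tendsto ts atTop atTop →
      ∃ φ : ℕ → ℕ, StrictMono φ ∧
        ∃ y : X, Tendsto (fun n => S (ts (φ n)) (x (φ n))) atTop (nhds y)) :
    ∃ A : Set X,
      IsCompact A ∧
      (∀ t ≥ (0:ℝ), S t '' A = A) ∧
      (∀ B' : Set X, IsBounded B' → ∀ ε > (0:ℝ),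
        ∃ T ≥ (0:ℝ), ∀ t ≥ T, S t '' B' ⊆ Metric.thickening ε A) ∧
      A = {a : X | ∃ u : ℝ → X, IsBounded (range u) ∧
        (∀ t : ℝ, ∀ h ≥ (0:ℝ), u (t + h) = S h (u t)) ∧ u 0 = a} :=
  global_attractor_existence_general S hsemi hcont B hB habsorb hasympt
end
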